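/- arXiv:2410.17415 — 4 statements merged into one kernel-verified Lean document; each statement's English description precedes it below -/
import Mathlib

section
/- Let w ∈ ℝⁿ satisfy w_1 > w_2 > … > w_n > 0 (strictly decreasing positive Fair OWA weights). Let y ∈ ℝⁿ, let i ≠ j be indices, and let ε > 0 satisfy y_i > y_j + ε. Define y_ε ∈ ℝⁿ by (y_ε)_i = y_i − ε, (y_ε)_j = y_j + ε, and (y_ε)_k = y_k for all k ∉ {i, j}. Then OWA_w(y_ε) > OWA_w(y). That is, Fair OWA is equitable: a marginal transfer from a coordinate with a higher value to a coordinate with a lower value strictly increases the aggregated value. -/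
/-!
With antitone weights, the rearrangement inequality makes `OWA w y` the minimum of
`∑ k, w k * y (π k)` over all permutations `π`. Let `σ` sort `yε`, so that
`OWA w yε = ∑ k, w k * yε (σ k)`, and compare this sum with one for `y`. If `σ` places `j`
before `i`, take `π = σ`: the transfer moves `ε` to the heavier weight. Otherwise take
`π = swap i j * σ`: relative to `y ∘ swap i j`, the vector `yε` is a transfer of
`y i - y j - ε > 0` from `j` to `i`, which again moves mass to the heavier weight.
-/

noncomputable def sortVec {n : ℕ} (y : Fin n → ℝ) : Fin n → ℝ :=
  y ∘ Tuple.sort y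

noncomputable def OWA {n : ℕ} (w y : Fin n → ℝ) : ℝ :=
  ∑ k, w k * sortVec y k

open Equiv

theorem sum_mul_lt_sum_mul_of_transfer {ι : Type*} [Fintype ι] [DecidableEq ι]
    {v z z' : ι → ℝ} {a b : ι} {δ : ℝ} (hv : v b < v a) (hδ : 0 < δ)
    (hza : z' a = z a + δ) (hzb : z' b = z b - δ) (hz : ∀ k, k ≠ a → k ≠ b → z' k = z k) :
    ∑ k, v k * z k < ∑ k, v k * z' k := by
  have hab : a ≠ b := fun h => hv.ne (h ▸ rfl)
  have hdiff : ∀ k, z' k - z k = (if k = a then δ else 0) - (if k = b then δ else 0) := by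
    intro k
    by_cases hka : k = a
    · subst hka; simp [hab, hza]
    by_cases hkb : k = b
    · subst hkb; simp [hka, hzb]
    simp [hka, hkb, hz k hka hkb]
  have hgain : ∑ k, v k * z' k - ∑ k, v k * z k = v a * δ - v b * δ := by
    calc ∑ k, v k * z' k - ∑ k, v k * z k = ∑ k, v k * (z' k - z k) := by
          simp only [mul_sub, Finset.sum_sub_distrib]
      _ = ∑ k, ((if k = a then v k * δ else 0) - if k = b then v k * δ else 0) := by
          simp only [hdiff, mul_sub, mul_ite, mul_zero]
      _ = v a * δ - v b * δ := by
          simp only [Finset.sum_sub_distrib, Finset.sum_ite_eq', Finset.mem_univ, if_true]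
  have := mul_pos (sub_pos.2 hv) hδ
  linarith

theorem sum_mul_comp_perm_lt_of_transfer {ι : Type*} [Fintype ι] [DecidableEq ι]
    {w z z' : ι → ℝ} {a b : ι} {δ : ℝ} (σ : Perm ι) (hw : w (σ.symm b) < w (σ.symm a))
    (hδ : 0 < δ) (hza : z' a = z a + δ) (hzb : z' b = z b - δ)
    (hz : ∀ k, k ≠ a → k ≠ b → z' k = z k) :
    ∑ k, w k * z (σ k) < ∑ k, w k * z' (σ k) := by
  have := sum_mul_lt_sum_mul_of_transfer (v := w ∘ σ.symm) hw hδ hza hzb hz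
  rw [← Equiv.sum_comp σ, ← Equiv.sum_comp σ (fun k => (w ∘ σ.symm) k * z' k)] at this
  simpa using this

theorem OWA_le_sum_mul_comp_perm {n : ℕ} {w : Fin n → ℝ} (hw : Antitone w) (y : Fin n → ℝ)
    (π : Perm (Fin n)) : OWA w y ≤ ∑ k, w k * y (π k) := by
  have := (hw.antivary (Tuple.monotone_sort y)).sum_mul_le_sum_mul_comp_perm
    (σ := (Tuple.sort y)⁻¹ * π)
  simpa [OWA, sortVec] using this

theorem owa_equitable_general {n : ℕ} (w : Fin n → ℝ)
    (hw_anti : StrictAnti w)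
    (y : Fin n → ℝ) (i j : Fin n) (hij : i ≠ j) (ε : ℝ) (hε : 0 < ε)
    (hgap : y i > y j + ε)
    (yε : Fin n → ℝ)
    (hyi : yε i = y i - ε) (hyj : yε j = y j + ε)
    (hyk : ∀ k, k ≠ i → k ≠ j → yε k = y k) :
    OWA w yε > OWA w y := by
  set σ := Tuple.sort yε
  suffices ∃ π : Perm (Fin n), ∑ k, w k * y (π k) < ∑ k, w k * yε (σ k) by
    obtain ⟨π, hπ⟩ := this
    exact (OWA_le_sum_mul_comp_perm hw_anti.antitone y π).trans_lt hπ
  rcases (σ.symm.injective.ne hij).lt_or_gt with hij_pos | hji_pos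
  · refine ⟨swap i j * σ, sum_mul_comp_perm_lt_of_transfer (z := fun k => y (swap i j k))
      (δ := y i - y j - ε) σ (hw_anti hij_pos) (by linarith) ?_ ?_ ?_⟩
    · simp only [swap_apply_left]; linarith
    · simp only [swap_apply_right]; linarith
    · intro k hki hkj
      simp only [swap_apply_of_ne_of_ne hki hkj, hyk k hki hkj]
  · exact ⟨σ, sum_mul_comp_perm_lt_of_transfer σ (hw_anti hji_pos) hε hyj hyi
      fun k hkj hki => hyk k hki hkj⟩

/-- Equitability of Fair OWA: with strictly decreasing positive weights, a marginal
transfer of `ε` from a higher-valued coordinate `i` to a lower-valued coordinate `j`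
(with `y i > y j + ε`) strictly increases the OWA value. -/
theorem owa_equitable {n : ℕ} (w : Fin n → ℝ)
    (hw_anti : StrictAnti w) (hw_pos : ∀ k, 0 < w k)
    (y : Fin n → ℝ) (i j : Fin n) (hij : i ≠ j) (ε : ℝ) (hε : 0 < ε)
    (hgap : y i > y j + ε)
    (yε : Fin n → ℝ)
    (hyi : yε i = y i - ε) (hyj : yε j = y j + ε)
    (hyk : ∀ k, k ≠ i → k ≠ j → yε k = y k) :
    OWA w yε > OWA w y :=
  owa_equitable_general w hw_anti y i j hij ε hε hgap yε hyi hyj hyk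
end

section
/- Let w ∈ ℝⁿ have strictly positive entries, let S ⊆ ℝⁿ be any set, and let x* ∈ S satisfy OWA_w(x*) ≥ OWA_w(y) for all y ∈ S. Then x* is Pareto efficient in S: there is no y ∈ S with x*_k ≤ y_k for all k and y ≠ x*. In particular, every maximizer of an OWA objective with positive weights over a feasible set is a Pareto efficient solution of the underlying multiobjective problem. -/
open Finset

namespace Tuple

variable {n : ℕ} {α : Type*} [LinearOrder α]

theorem comp_sort_apply_le_iff (f : Fin n → α) (j : Fin n) (a : α) :
    (f ∘ sort f) j ≤ a ↔ j < #{i | f i ≤ a} := by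
  have hcard : #{i | (f ∘ sort f) i ≤ a} = #{i | f i ≤ a} :=
    card_equiv (sort f) (by simp)
  rw [← lt_card_le_iff_apply_le_of_monotone (monotone_sort f), hcard]

theorem comp_sort_le_comp_sort {f g : Fin n → α} (h : f ≤ g) : f ∘ sort f ≤ g ∘ sort g := by
  intro j
  have hg : j < #{i | g i ≤ (g ∘ sort g) j} := (comp_sort_apply_le_iff g j _).1 le_rfl
  refine (comp_sort_apply_le_iff f j _).2 (hg.trans_le (card_le_card ?_))
  intro i
  simpa only [mem_filter, mem_univ, true_and] using (h i).trans

end Tuple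

section

variable {n : ℕ}

theorem sum_sortVec (y : Fin n → ℝ) : ∑ k, sortVec y k = ∑ k, y k :=
  Equiv.sum_comp (Tuple.sort y) y

theorem sortVec_strictMono : StrictMono (sortVec : (Fin n → ℝ) → Fin n → ℝ) := by
  intro x y hxy
  have hle : sortVec x ≤ sortVec y := Tuple.comp_sort_le_comp_sort hxy.le
  refine hle.lt_of_ne fun heq => hxy.ne ?_
  have hsum : ∑ k, x k = ∑ k, y k := by rw [← sum_sortVec, heq, sum_sortVec]
  funext k
  exact (sum_eq_sum_iff_of_le fun k _ => hxy.le k).1 hsum k (mem_univ k)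

theorem OWA_strictMono {w : Fin n → ℝ} (hw : ∀ k, 0 < w k) : StrictMono (OWA w) := by
  intro x y hxy
  obtain ⟨hle, k, hk⟩ := Pi.lt_def.1 (sortVec_strictMono hxy)
  exact sum_lt_sum (fun i _ => mul_le_mul_of_nonneg_left (hle i) (hw i).le)
    ⟨k, mem_univ k, mul_lt_mul_of_pos_left hk (hw k)⟩

end

theorem owa_maximizer_pareto_efficient_general {n : ℕ} (w : Fin n → ℝ) (hw_pos : ∀ k, 0 < w k)
    (S : Set (Fin n → ℝ)) (xstar : Fin n → ℝ)
    (hopt : ∀ y ∈ S, OWA w y ≤ OWA w xstar) :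
    ¬ ∃ y ∈ S, (∀ k, xstar k ≤ y k) ∧ y ≠ xstar := by
  rintro ⟨y, hyS, hle, hne⟩
  exact (hopt y hyS).not_gt (OWA_strictMono hw_pos (lt_of_le_of_ne hle hne.symm))

/-- Every maximizer of an OWA objective with positive weights over a feasible set `S`
is Pareto efficient in `S`: no point of `S` componentwise dominates it. -/
theorem owa_maximizer_pareto_efficient {n : ℕ} (w : Fin n → ℝ) (hw_pos : ∀ k, 0 < w k)
    (S : Set (Fin n → ℝ)) (xstar : Fin n → ℝ) (hmem : xstar ∈ S)
    (hopt : ∀ y ∈ S, OWA w y ≤ OWA w xstar) :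
    ¬ ∃ y ∈ S, (∀ k, xstar k ≤ y k) ∧ y ≠ xstar :=
  owa_maximizer_pareto_efficient_general w hw_pos S xstar hopt
end

section
/- Let w ∈ ℝⁿ be nonincreasing, i.e., w_1 ≥ w_2 ≥ … ≥ w_n. Then the function y ↦ OWA_w(y) is concave on ℝⁿ. -/
/-- Key rearrangement fact: with antitone weights, the OWA is the minimum over
permutations of the weighted sums. -/
theorem owa_le_perm {n : ℕ} (w : Fin n → ℝ) (hw : Antitone w) (y : Fin n → ℝ)
    (σ : Equiv.Perm (Fin n)) : OWA w y ≤ ∑ k, w k * y (σ k) := by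
  have hmono : Monotone (sortVec y) := Tuple.monotone_sort y
  have hav : Antivary w (sortVec y) := by
    intro i j h
    have hij : i ≤ j := by
      by_contra hc
      exact absurd (hmono (le_of_not_ge hc)) (not_le.mpr h)
    exact hw hij
  have key := hav.sum_mul_le_sum_mul_comp_perm (σ := (Tuple.sort y)⁻¹ * σ)
  calc OWA w y ≤ ∑ k, w k * sortVec y (((Tuple.sort y)⁻¹ * σ) k) := key
    _ = ∑ k, w k * y (σ k) := by
        apply Finset.sum_congr rfl
        intro k _
        simp [sortVec]

/-- With nonincreasing weights, the OWA function is concave on `ℝⁿ`. -/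
theorem owa_concave {n : ℕ} (w : Fin n → ℝ) (hw : Antitone w) :
    ConcaveOn ℝ Set.univ (fun y : Fin n → ℝ => OWA w y) := by
  refine ⟨convex_univ, ?_⟩
  intro x _ y _ a b ha hb hab
  set z := a • x + b • y with hz
  set σ := Tuple.sort z with hσ
  have hzeq : OWA w z = ∑ k, w k * z (σ k) := by
    apply Finset.sum_congr rfl
    intro k _
    simp [sortVec, hσ]
  have hx : OWA w x ≤ ∑ k, w k * x (σ k) := owa_le_perm w hw x σ
  have hy : OWA w y ≤ ∑ k, w k * y (σ k) := owa_le_perm w hw y σ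
  have : OWA w z = a * ∑ k, w k * x (σ k) + b * ∑ k, w k * y (σ k) := by
    rw [hzeq, Finset.mul_sum, Finset.mul_sum, ← Finset.sum_add_distrib]
    apply Finset.sum_congr rfl
    intro k _
    simp [hz]
    ring
  show a • OWA w x + b • OWA w y ≤ OWA w z
  rw [this]
  have := add_le_add (mul_le_mul_of_nonneg_left hx ha) (mul_le_mul_of_nonneg_left hy hb)
  simpa [smul_eq_mul] using this
end

section
/- Let w ∈ ℝⁿ be nonincreasing (w_1 ≥ w_2 ≥ … ≥ w_n) and let C(w) ⊆ ℝⁿ denote the permutahedron generated by w. Then for every y ∈ ℝⁿ, OWA_w(y) = min_{z ∈ C(w)} ⟨z, y⟩, where ⟨·,·⟩ is the standard Euclidean inner product. -/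
/-- The permutahedron generated by `w`: the convex hull of all coordinate
permutations of `w`. -/
noncomputable def permutahedron {n : ℕ} (w : Fin n → ℝ) : Set (Fin n → ℝ) :=
  convexHull ℝ {z : Fin n → ℝ | ∃ σ : Equiv.Perm (Fin n), z = w ∘ σ}

/-!
By the rearrangement inequality, among the vertices `w ∘ σ` of the permutahedron the pairing
`⟨w ∘ σ, y⟩` is smallest when `w ∘ σ` is ordered oppositely to `y`, where it equals `OWA w y`.
A linear functional attains its minimum over a convex hull at one of the generating points.
-/

variable {n : ℕ}

theorem OWA_le_sum_comp_perm_mul {w : Fin n → ℝ} (hw : Antitone w) (y : Fin n → ℝ)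
    (σ : Equiv.Perm (Fin n)) : OWA w y ≤ ∑ i, w (σ i) * y i :=
  calc OWA w y ≤ ∑ k, w ((Tuple.sort y).trans σ k) * sortVec y k :=
        (hw.antivary (Tuple.monotone_sort y)).sum_mul_le_sum_comp_perm_mul
    _ = ∑ i, w (σ i) * y i := Equiv.sum_comp (Tuple.sort y) fun i ↦ w (σ i) * y i

theorem OWA_eq_sum_comp_sort_symm_mul (w y : Fin n → ℝ) :
    OWA w y = ∑ i, w ((Tuple.sort y).symm i) * y i := by
  rw [← Equiv.sum_comp (Tuple.sort y)]
  simp [OWA, sortVec]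

/-- With nonincreasing weights, `OWA w y` equals the (attained) minimum of the inner
product `⟨z, y⟩` over the permutahedron generated by `w`. -/
theorem owa_eq_min_over_permutahedron {n : ℕ} (w : Fin n → ℝ) (hw : Antitone w)
    (y : Fin n → ℝ) :
    IsLeast {v : ℝ | ∃ z ∈ permutahedron w, v = ∑ i, z i * y i} (OWA w y) := by
  refine ⟨⟨w ∘ (Tuple.sort y).symm, subset_convexHull ℝ _ ⟨_, rfl⟩,
    OWA_eq_sum_comp_sort_symm_mul w y⟩, ?_⟩
  rintro _ ⟨z, hz, rfl⟩
  obtain ⟨_, ⟨σ, rfl⟩, hσ⟩ := (((dotProductBilin ℝ ℝ).flip y).concaveOn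
    convex_univ).exists_le_of_mem_convexHull (Set.subset_univ _) hz
  exact (OWA_le_sum_comp_perm_mul hw y σ).trans hσ
end
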